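/- arXiv:1302.5455 — 4 statements merged into one kernel-verified Lean document; each statement's English description precedes it below -/
import Mathlib

section
/- In the max-max diffusion model, the information value I'_m(u) at any node u after m propagation steps under the joint seeding with all seed sets ψ_1,…,ψ_K is at most the maximum over all singleton seedings (x,k) with x ∈ ψ_k of the information value I_m(u) at u after m steps under that singleton seeding. -/
/-!
The overall value obeys the recursion `I_{m+1}(u) = I_m(u) ⊔ ⨆_v relay_{v→u}(I_m(v))`, where
`relay_{v→u}(x) = α(v,u)·x` if `x ≥ t(v)` and `0` otherwise. The relay is monotone and kills
`0`, so on a linear order it commutes with finite suprema. Hence the pointwise supremum of the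
singleton trajectories is a super-solution of the recursion, and by induction on `m` it dominates
the joint trajectory once it does so at time `0`.
-/

open scoped NNReal

/-- Per-source information values in the max-max diffusion model (λ_d = λ_s = 0) with
threshold gating and no evacuation: at each step a node `v` whose overall information
value reaches its threshold `t v` propagates its per-source values, attenuated by the
edge trust `α v u`, to every node `u`; values are combined by taking maxima. -/
noncomputable def mval {V : Type*} [Fintype V] {K : ℕ} (α : V → V → ℝ≥0) (t : V → ℝ≥0)
    (init : V → Fin K → ℝ≥0) : ℕ → V → Fin K → ℝ≥0
  | 0 => init
  | m + 1 => fun u k =>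
      mval α t init m u k ⊔
        Finset.univ.sup fun v : V =>
          if t v ≤ Finset.univ.sup (fun k' => mval α t init m v k')
          then α v u * mval α t init m v k else 0

/-- Overall information value at node `u` after `m` steps: maximum over sources. -/
noncomputable def minfo {V : Type*} [Fintype V] {K : ℕ} (α : V → V → ℝ≥0) (t : V → ℝ≥0)
    (init : V → Fin K → ℝ≥0) (m : ℕ) (u : V) : ℝ≥0 :=
  Finset.univ.sup fun k => mval α t init m u k

open Finset

noncomputable def thresholdRelay (a θ x : ℝ≥0) : ℝ≥0 :=
  if θ ≤ x then a * x else 0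

lemma thresholdRelay_monotone (a θ : ℝ≥0) : Monotone (thresholdRelay a θ) := by
  intro x y hxy
  unfold thresholdRelay
  split_ifs with hx hy
  · exact mul_le_mul_right hxy a
  · exact absurd (hx.trans hxy) hy
  · exact zero_le
  · exact le_rfl

lemma thresholdRelay_zero (a θ : ℝ≥0) : thresholdRelay a θ 0 = 0 := by
  simp [thresholdRelay]

lemma thresholdRelay_finset_sup {ι : Type*} (a θ : ℝ≥0) (s : Finset ι) (f : ι → ℝ≥0) :
    thresholdRelay a θ (s.sup f) = s.sup fun i => thresholdRelay a θ (f i) :=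
  apply_sup_eq_sup_comp_of_linearOrder _ (thresholdRelay_monotone a θ) (thresholdRelay_zero a θ)

section Recursion

variable {V : Type*} [Fintype V] {K : ℕ} (α : V → V → ℝ≥0) (t : V → ℝ≥0)
  (init : V → Fin K → ℝ≥0)

lemma minfo_succ (m : ℕ) (u : V) :
    minfo α t init (m + 1) u =
      minfo α t init m u ⊔ univ.sup fun v => thresholdRelay (α v u) (t v) (minfo α t init m v) := by
  have relay_eq (v : V) :
      (univ.sup fun k => if t v ≤ minfo α t init m v then α v u * mval α t init m v k else 0) =
        thresholdRelay (α v u) (t v) (minfo α t init m v) := by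
    unfold thresholdRelay minfo
    split_ifs
    · exact (NNReal.mul_finset_sup _ _ _).symm
    · exact sup_bot _
  calc minfo α t init (m + 1) u
      = minfo α t init m u ⊔ univ.sup fun k => univ.sup fun v =>
          if t v ≤ minfo α t init m v then α v u * mval α t init m v k else 0 := sup_sup
    _ = _ := by rw [Finset.sup_comm]; simp only [relay_eq]

lemma minfo_le_minfo_succ (m : ℕ) (u : V) : minfo α t init m u ≤ minfo α t init (m + 1) u :=
  (minfo_succ α t init m u).ge.trans' le_sup_left

lemma thresholdRelay_le_minfo_succ (m : ℕ) (u v : V) :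
    thresholdRelay (α v u) (t v) (minfo α t init m v) ≤ minfo α t init (m + 1) u := by
  rw [minfo_succ]
  exact le_sup_of_le_right (le_sup (f := fun v => thresholdRelay (α v u) (t v) _) (mem_univ v))

end Recursion

lemma minfo_le_finset_sup_of_le_zero {V ι : Type*} [Fintype V] {K : ℕ} (α : V → V → ℝ≥0)
    (t : V → ℝ≥0) (init : V → Fin K → ℝ≥0) (s : Finset ι) (inits : ι → V → Fin K → ℝ≥0)
    (h₀ : ∀ u, minfo α t init 0 u ≤ s.sup fun i => minfo α t (inits i) 0 u) (m : ℕ) (u : V) :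
    minfo α t init m u ≤ s.sup fun i => minfo α t (inits i) m u := by
  induction m generalizing u with
  | zero => exact h₀ u
  | succ m ih =>
    rw [minfo_succ]
    refine sup_le ((ih u).trans (sup_mono_fun fun i _ => minfo_le_minfo_succ α t _ m u)) ?_
    refine Finset.sup_le fun v _ => ?_
    calc thresholdRelay (α v u) (t v) (minfo α t init m v)
        ≤ thresholdRelay (α v u) (t v) (s.sup fun i => minfo α t (inits i) m v) :=
          thresholdRelay_monotone _ _ (ih v)
      _ = s.sup fun i => thresholdRelay (α v u) (t v) (minfo α t (inits i) m v) :=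
          thresholdRelay_finset_sup _ _ _ _
      _ ≤ s.sup fun i => minfo α t (inits i) (m + 1) u :=
          sup_mono_fun fun i _ => thresholdRelay_le_minfo_succ α t _ m u v

theorem joint_le_sup_singleton_general {V : Type*} [Fintype V] [DecidableEq V] {K : ℕ}
    (α : V → V → ℝ≥0) (t : V → ℝ≥0) (I : Fin K → ℝ≥0) (β : Fin K → V → ℝ≥0)
    (ψ : Fin K → Finset V) :
    ∀ (m : ℕ) (u : V),
      minfo α t (fun u j => if u ∈ ψ j then β j u * I j else 0) m u ≤
      Finset.univ.sup fun k : Fin K =>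
        (ψ k).sup fun x =>
          minfo α t (fun u j => if u = x ∧ j = k then β k x * I k else 0) m u := by
  intro m u
  let single (p : Σ _ : Fin K, V) : V → Fin K → ℝ≥0 := fun u j =>
    if u = p.2 ∧ j = p.1 then β p.1 p.2 * I p.1 else 0
  rw [← sup_sigma univ ψ fun p => minfo α t (single p) m u]
  refine minfo_le_finset_sup_of_le_zero α t _ _ single (fun u => Finset.sup_le fun j _ => ?_) m u
  show (if u ∈ ψ j then β j u * I j else 0) ≤ _
  split_ifs with hu
  · calc β j u * I j = mval α t (single ⟨j, u⟩) 0 u j := by simp [single, mval]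
      _ ≤ minfo α t (single ⟨j, u⟩) 0 u := le_sup (f := fun k => mval α t _ 0 u k) (mem_univ j)
      _ ≤ _ := le_sup (f := fun p => minfo α t (single p) 0 u) (mem_sigma.2 ⟨mem_univ j, hu⟩)
  · exact zero_le

/-- In the max-max model, the information value at any node `u` after `m` steps under the
joint seeding with all seed sets `ψ 1, …, ψ K` is at most the maximum, over all singleton
seedings `(x,k)` with `x ∈ ψ k`, of the information value at `u` after `m` steps under
that singleton seeding. -/
theorem joint_le_sup_singleton {V : Type*} [Fintype V] [DecidableEq V] {K : ℕ}
    (α : V → V → ℝ≥0) (t : V → ℝ≥0) (I : Fin K → ℝ≥0) (β : Fin K → V → ℝ≥0)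
    (hα : ∀ u v, α u v ≤ 1) (hβ : ∀ k u, β k u ≤ 1)
    (ψ : Fin K → Finset V) :
    ∀ (m : ℕ) (u : V),
      minfo α t (fun u j => if u ∈ ψ j then β j u * I j else 0) m u ≤
      Finset.univ.sup fun k : Fin K =>
        (ψ k).sup fun x =>
          minfo α t (fun u j => if u = x ∧ j = k then β k x * I k else 0) m u :=
  joint_le_sup_singleton_general α t I β ψ
end

section
/- The greedy algorithm applied to the coverage function F(S) = |⋃_{(x,k) ∈ S} γ(x,k)| under a partition matroid constraint (at most B_k pairs with second coordinate k, for each k) produces a set S_greedy with F(S_greedy) ≥ (1/2) · max{F(S) : S satisfies the partition constraint}. -/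
/-- The coverage set function on (node, source) pairs:
`F(S) = |⋃_{(x,k) ∈ S} γ(x,k)|`. -/
def pairCoverage {V : Type*} [DecidableEq V] {K : ℕ}
    (γ : V → Fin K → Finset V) (S : Finset (V × Fin K)) : ℕ :=
  (S.biUnion fun p => γ p.1 p.2).card

def partitionIndep {V : Type*} [DecidableEq V] {K : ℕ}
    (B : Fin K → ℕ) (S : Finset (V × Fin K)) : Prop :=
  ∀ k : Fin K, (S.filter fun p => p.2 = k).card ≤ B k

/-! For every `T`, submodularity of coverage gives `F(T) ≤ F(G) + ∑_{e ∈ T} Δ(e | G)`, where `G`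
is the greedy set and `Δ` the marginal gain. If `T` is independent, Hall's theorem matches its
elements injectively to greedy steps `i` at which their colour (second coordinate) still has
room, so that `e` was a feasible choice at step `i`: the colours of a set `C` are all saturated
only once at least `∑_{k ∈ C} B k` pairs have been picked, and `T` has at most that many pairs
coloured in `C`. Greedy maximality and diminishing returns then give
`Δ(e | G) ≤ Δ(e | s i) ≤ F(s (i+1)) - F(s i)`, and these gains of distinct steps add up to at
most `F(G)`. -/

open Finset

section Coverage

variable {V : Type*} [DecidableEq V] {K : ℕ} (γ : V → Fin K → Finset V)

def marginalGain (e : V × Fin K) (S : Finset (V × Fin K)) : ℕ :=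
  #(γ e.1 e.2 \ S.biUnion fun p => γ p.1 p.2)

lemma pairCoverage_insert (e : V × Fin K) (S : Finset (V × Fin K)) :
    pairCoverage γ (insert e S) = pairCoverage γ S + marginalGain γ e S := by
  rw [pairCoverage, marginalGain, biUnion_insert, ← card_sdiff_add_card, add_comm]
  rfl

lemma pairCoverage_mono : Monotone (pairCoverage γ) := fun _ _ h =>
  card_le_card (biUnion_subset_biUnion_of_subset_left _ h)

lemma marginalGain_anti (e : V × Fin K) : Antitone (marginalGain γ e) := fun _ _ h =>
  card_le_card (sdiff_subset_sdiff subset_rfl (biUnion_subset_biUnion_of_subset_left _ h))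

lemma pairCoverage_le_add_sum_marginalGain (T G : Finset (V × Fin K)) :
    pairCoverage γ T ≤ pairCoverage γ G + ∑ e ∈ T, marginalGain γ e G := by
  set U := G.biUnion fun p => γ p.1 p.2
  have hcover : (T.biUnion fun p => γ p.1 p.2) ⊆ U ∪ T.biUnion fun e => γ e.1 e.2 \ U := by
    intro v hv
    obtain ⟨e, he, hve⟩ := mem_biUnion.mp hv
    by_cases hvU : v ∈ U
    · exact mem_union_left _ hvU
    · exact mem_union_right _ (mem_biUnion.mpr ⟨e, he, mem_sdiff.mpr ⟨hve, hvU⟩⟩)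
  calc pairCoverage γ T ≤ #(U ∪ T.biUnion fun e => γ e.1 e.2 \ U) := card_le_card hcover
    _ ≤ #U + #(T.biUnion fun e => γ e.1 e.2 \ U) := card_union_le _ _
    _ ≤ #U + ∑ e ∈ T, #(γ e.1 e.2 \ U) := Nat.add_le_add_left card_biUnion_le _

end Coverage

section PartitionMatroid

variable {V : Type*} {K : ℕ} {B : Fin K → ℕ}

lemma exists_card_filter_lt_of_card_lt_sum {S : Finset (V × Fin K)} {C : Finset (Fin K)}
    (h : #S < ∑ k ∈ C, B k) : ∃ k ∈ C, #{p ∈ S | p.2 = k} < B k := by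
  by_contra! hC
  have hsum := sum_le_sum hC
  rw [sum_card_fiberwise_eq_card_filter] at hsum
  exact (hsum.trans (card_filter_le _ _)).not_gt h

variable [DecidableEq V]

lemma partitionIndep.mono {S T : Finset (V × Fin K)} (hT : partitionIndep B T) (h : S ⊆ T) :
    partitionIndep B S := fun k =>
  (card_le_card (filter_subset_filter _ h)).trans (hT k)

lemma partitionIndep.card_le_sum {S : Finset (V × Fin K)} (hS : partitionIndep B S) :
    #S ≤ ∑ k ∈ S.image Prod.snd, B k := by
  rw [card_eq_sum_card_image Prod.snd S]
  exact sum_le_sum fun k _ => hS k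

lemma partitionIndep.insert {S : Finset (V × Fin K)} {e : V × Fin K} (hS : partitionIndep B S)
    (he : #{p ∈ S | p.2 = e.2} < B e.2) : partitionIndep B (insert e S) := by
  intro k
  rw [filter_insert]
  split_ifs with hk
  · subst hk
    exact (card_insert_le _ _).trans he
  · exact hS k

theorem exists_injective_step_with_room {s : ℕ → Finset (V × Fin K)} {n : ℕ}
    (hcard : ∀ i < n, #(s i) ≤ i) (hn : ∑ k, B k ≤ n) {T : Finset (V × Fin K)}
    (hT : partitionIndep B T) :
    ∃ f : T → ℕ, Function.Injective f ∧
      ∀ e : T, f e < n ∧ #{p ∈ s (f e) | p.2 = e.1.2} < B e.1.2 := by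
  set room : Fin K → Finset ℕ := fun k => {i ∈ range n | #{p ∈ s i | p.2 = k} < B k}
  suffices hall : ∀ S : Finset T, #S ≤ #(S.biUnion fun e => room e.1.2) by
    obtain ⟨f, hf, hroom⟩ := (all_card_le_biUnion_card_iff_exists_injective _).mp hall
    refine ⟨f, hf, fun e => ?_⟩
    simpa only [room, mem_filter, mem_range] using hroom e
  intro S
  set C := (S.map (Function.Embedding.subtype _)).image Prod.snd
  have hC : C.biUnion room ⊆ S.biUnion fun e => room e.1.2 := by
    intro i hi
    obtain ⟨k, hk, hik⟩ := mem_biUnion.mp hi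
    obtain ⟨p, hp, rfl⟩ := mem_image.mp hk
    obtain ⟨e, he, rfl⟩ := mem_map.mp hp
    exact mem_biUnion.mpr ⟨e, he, hik⟩
  have hrange : range (∑ k ∈ C, B k) ⊆ C.biUnion room := by
    intro i hi
    have hin : i < n := (mem_range.mp hi).trans_le
      ((sum_le_sum_of_subset (subset_univ C)).trans hn)
    obtain ⟨k, hk, hroom⟩ :=
      exists_card_filter_lt_of_card_lt_sum ((hcard i hin).trans_lt (mem_range.mp hi))
    exact mem_biUnion.mpr ⟨k, hk, mem_filter.mpr ⟨mem_range.mpr hin, hroom⟩⟩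
  have hSindep : partitionIndep B (S.map (Function.Embedding.subtype _)) :=
    hT.mono (map_subtype_subset S)
  calc #S = #(S.map (Function.Embedding.subtype _)) := (card_map _).symm
    _ ≤ ∑ k ∈ C, B k := hSindep.card_le_sum
    _ = #(range (∑ k ∈ C, B k)) := (card_range _).symm
    _ ≤ #(S.biUnion fun e => room e.1.2) := card_le_card (hrange.trans hC)

end PartitionMatroid

section Greedy

variable {V : Type*} [DecidableEq V] {K : ℕ}

def IsGreedyStep (γ : V → Fin K → Finset V) (B : Fin K → ℕ) (S S' : Finset (V × Fin K)) :
    Prop :=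
  ∃ e : V × Fin K, partitionIndep B (insert e S) ∧ S' = insert e S ∧
    ∀ e' : V × Fin K, partitionIndep B (insert e' S) →
      pairCoverage γ (insert e' S) ≤ pairCoverage γ (insert e S)

variable {γ : V → Fin K → Finset V} {B : Fin K → ℕ}

namespace IsGreedyStep

variable {S S' : Finset (V × Fin K)}

lemma subset (h : IsGreedyStep γ B S S') : S ⊆ S' := by
  obtain ⟨e, -, rfl, -⟩ := h
  exact subset_insert e S

lemma indep (h : IsGreedyStep γ B S S') : partitionIndep B S' := by
  obtain ⟨e, he, rfl, -⟩ := h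
  exact he

lemma card_le (h : IsGreedyStep γ B S S') : #S' ≤ #S + 1 := by
  obtain ⟨e, -, rfl, -⟩ := h
  exact card_insert_le e S

lemma add_marginalGain_le (h : IsGreedyStep γ B S S') {e' : V × Fin K}
    (he' : partitionIndep B (insert e' S)) :
    pairCoverage γ S + marginalGain γ e' S ≤ pairCoverage γ S' := by
  obtain ⟨e, -, rfl, hmax⟩ := h
  rw [← pairCoverage_insert]
  exact hmax e' he'

end IsGreedyStep

variable {s : ℕ → Finset (V × Fin K)} {n : ℕ}

lemma greedy_subset (hstep : ∀ i < n, IsGreedyStep γ B (s i) (s (i + 1))) {i j : ℕ}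
    (hij : i ≤ j) (hjn : j ≤ n) : s i ⊆ s j := by
  induction j, hij using Nat.le_induction with
  | base => exact subset_rfl
  | succ j _ ih => exact (ih (by omega)).trans (hstep j (by omega)).subset

lemma greedy_partitionIndep (h0 : s 0 = ∅)
    (hstep : ∀ i < n, IsGreedyStep γ B (s i) (s (i + 1))) {i : ℕ} (hi : i ≤ n) :
    partitionIndep B (s i) := by
  cases i with
  | zero => simp [h0, partitionIndep]
  | succ i => exact (hstep i (by omega)).indep

lemma greedy_card_le (h0 : s 0 = ∅)
    (hstep : ∀ i < n, IsGreedyStep γ B (s i) (s (i + 1))) {i : ℕ} (hi : i ≤ n) :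
    #(s i) ≤ i := by
  induction i with
  | zero => simp [h0]
  | succ i ih => exact (hstep i (by omega)).card_le.trans (by simpa using ih (by omega))

lemma sum_range_greedy_gain (h0 : s 0 = ∅)
    (hstep : ∀ i < n, IsGreedyStep γ B (s i) (s (i + 1))) {m : ℕ} (hm : m ≤ n) :
    ∑ i ∈ range m, (pairCoverage γ (s (i + 1)) - pairCoverage γ (s i)) =
      pairCoverage γ (s m) := by
  induction m with
  | zero => simp [h0, pairCoverage]
  | succ m ih =>
    have hmono := pairCoverage_mono γ (hstep m (by omega)).subset
    rw [sum_range_succ, ih (by omega)]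
    omega

lemma sum_marginalGain_le_greedy (h0 : s 0 = ∅)
    (hstep : ∀ i < n, IsGreedyStep γ B (s i) (s (i + 1))) (hn : ∑ k, B k ≤ n)
    {T : Finset (V × Fin K)} (hT : partitionIndep B T) :
    ∑ e ∈ T, marginalGain γ e (s n) ≤ pairCoverage γ (s n) := by
  obtain ⟨f, hf, hroom⟩ :=
    exists_injective_step_with_room (fun i hi => greedy_card_le h0 hstep hi.le) hn hT
  set gain := fun i => pairCoverage γ (s (i + 1)) - pairCoverage γ (s i)
  have hgain : ∀ e : T, marginalGain γ e (s n) ≤ gain (f e) := by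
    intro e
    obtain ⟨hfe, hfe_room⟩ := hroom e
    have hstep_gain := (hstep _ hfe).add_marginalGain_le
      ((greedy_partitionIndep h0 hstep hfe.le).insert hfe_room)
    have hanti := marginalGain_anti γ e.1 (greedy_subset hstep hfe.le le_rfl)
    simp only [gain]
    omega
  calc ∑ e ∈ T, marginalGain γ e (s n)
    _ = ∑ e : T, marginalGain γ e (s n) := (sum_coe_sort _ _).symm
    _ ≤ ∑ e : T, gain (f e) := sum_le_sum fun e _ => hgain e
    _ = ∑ i ∈ univ.image f, gain i := (sum_image fun _ _ _ _ h => hf h).symm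
    _ ≤ ∑ i ∈ range n, gain i :=
      sum_le_sum_of_subset (image_subset_iff.mpr fun e _ => mem_range.mpr (hroom e).1)
    _ = pairCoverage γ (s n) := sum_range_greedy_gain h0 hstep le_rfl

end Greedy

theorem greedy_partition_matroid_approx_general {V : Type*} [DecidableEq V] {K : ℕ}
    (γ : V → Fin K → Finset V) (B : Fin K → ℕ) (s : ℕ → Finset (V × Fin K))
    (h0 : s 0 = ∅)
    (hstep : ∀ i < ∑ k : Fin K, B k, ∃ e : V × Fin K,
      partitionIndep B (insert e (s i)) ∧ s (i + 1) = insert e (s i) ∧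
      ∀ e' : V × Fin K, partitionIndep B (insert e' (s i)) →
        pairCoverage γ (insert e' (s i)) ≤ pairCoverage γ (insert e (s i))) :
    ∀ T : Finset (V × Fin K), partitionIndep B T →
      pairCoverage γ T ≤ 2 * pairCoverage γ (s (∑ k : Fin K, B k)) := by
  intro T hT
  set G := s (∑ k, B k)
  calc pairCoverage γ T ≤ pairCoverage γ G + ∑ e ∈ T, marginalGain γ e G :=
        pairCoverage_le_add_sum_marginalGain γ T G
    _ ≤ pairCoverage γ G + pairCoverage γ G :=
        Nat.add_le_add_left (sum_marginalGain_le_greedy h0 hstep le_rfl hT) _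
    _ = 2 * pairCoverage γ G := (two_mul _).symm

/-- Greedy under a partition matroid constraint for the coverage function
`F(S) = |⋃_{(x,k) ∈ S} γ(x,k)|`: starting from the empty set and, at each of `∑_k B_k`
steps, adding a feasible pair maximizing the marginal gain, the resulting set satisfies
`F(S_greedy) ≥ (1/2) · max {F(T) : T independent in the partition matroid}`. -/
theorem greedy_partition_matroid_approx {V : Type*} [Fintype V] [DecidableEq V] {K : ℕ}
    (γ : V → Fin K → Finset V) (B : Fin K → ℕ) (s : ℕ → Finset (V × Fin K))
    (h0 : s 0 = ∅)
    (hstep : ∀ i < ∑ k : Fin K, B k, ∃ e : V × Fin K,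
      partitionIndep B (insert e (s i)) ∧ s (i + 1) = insert e (s i) ∧
      ∀ e' : V × Fin K, partitionIndep B (insert e' (s i)) →
        pairCoverage γ (insert e' (s i)) ≤ pairCoverage γ (insert e (s i))) :
    ∀ T : Finset (V × Fin K), partitionIndep B T →
      pairCoverage γ T ≤ 2 * pairCoverage γ (s (∑ k : Fin K, B k)) :=
  greedy_partition_matroid_approx_general γ B s h0 hstep
end

section
/- The coverage function of the general diffusion model is not monotone: there exists a graph with trust values, thresholds, and evacuation time τ = 1, a single source of value 1, and seed sets ψ = {a} ⊂ ψ' = {a,b}, such that the number of nodes ultimately evacuated from ψ' (namely 5) is strictly less than from ψ (namely k+4, for any k ≥ 2). -/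
open scoped NNReal Classical

/-- One step of the max-max diffusion with evacuation time `τ = 1`: the state consists of
the set of still-active nodes and the current information values. Active nodes whose value
reaches their threshold are Believed; they propagate their value, attenuated by the edge
trusts `α`, to every node, and then evacuate (are removed from the active set). -/
noncomputable def estep {V : Type*} [Fintype V] (α : V → V → ℝ≥0) (t : V → ℝ≥0)
    (s : Finset V × (V → ℝ≥0)) : Finset V × (V → ℝ≥0) :=
  (s.1.filter fun u => ¬ t u ≤ s.2 u,
   fun u => s.2 u ⊔ (s.1.filter fun w => t w ≤ s.2 w).sup fun w => α w u * s.2 w)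

/-- The number of nodes that ultimately evacuate, starting from all nodes active with
initial information values `init`. -/
noncomputable def evacCount {V : Type*} (iV : Fintype V) (α : V → V → ℝ≥0) (t : V → ℝ≥0)
    (init : V → ℝ≥0) : ℕ :=
  Set.ncard {u : V | ∃ m : ℕ, u ∉ ((estep α t)^[m] (Finset.univ, init)).1}


/-! In the network below the path `a — x₁ — x₂ — c` carries value `1` from `a` to the hub `c`
in three steps, and `c` (threshold `0.1`) would then pass `1` on to its `k` leaves, which all
believe and evacuate. Seeding `b` as well lets `c` believe already at time `1`, on the
attenuated value `0.1` received over its weak edge to `b`; `c` evacuates at once, the leaves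
only ever receive `0.1 < 0.5`, and the `k` leaves stay put. -/

open Finset Function

section Evacuation

variable {V : Type*} [Fintype V] {α : V → V → ℝ≥0} {t : V → ℝ≥0}

theorem estep_eq_of_believers {S B S' : Finset V} {f f' : V → ℝ≥0}
    (hB : ∀ u, u ∈ B ↔ u ∈ S ∧ t u ≤ f u) (hS' : ∀ u, u ∈ S' ↔ u ∈ S ∧ f u < t u)
    (hf : ∀ u, f u ⊔ B.sup (fun w => α w u * f w) = f' u) :
    estep α t (S, f) = (S', f') := by
  have hfilter : S.filter (fun w => t w ≤ f w) = B := by ext u; simp [hB]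
  have hfilter' : S.filter (fun u => ¬ t u ≤ f u) = S' := by ext u; simp [hS']
  simp only [estep, hfilter, hfilter', hf]

theorem estep_eq_self_of_forall_lt {s : Finset V × (V → ℝ≥0)} (h : ∀ u ∈ s.1, s.2 u < t u) :
    estep α t s = s := by
  have hB : s.1.filter (fun w => t w ≤ s.2 w) = ∅ := by
    simpa [filter_eq_empty_iff] using h
  refine Prod.ext (filter_true_of_mem fun u hu => not_le.2 (h u hu)) (funext fun u => ?_)
  simp [estep, hB]

theorem antitone_fst_iterate_estep (s : Finset V × (V → ℝ≥0)) :
    Antitone fun n => ((estep α t)^[n] s).1 :=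
  antitone_nat_of_succ_le fun n => by
    rw [iterate_succ_apply']
    exact filter_subset _ _

theorem evacCount_eq_card_compl [DecidableEq V] {init : V → ℝ≥0} {M : ℕ} {S : Finset V}
    {f : V → ℝ≥0} (hM : (estep α t)^[M] (univ, init) = (S, f))
    (hfix : estep α t (S, f) = (S, f)) :
    evacCount inferInstance α t init = Sᶜ.card := by
  have hstable : ∀ n, M ≤ n → (estep α t)^[n] (univ, init) = (S, f) := by
    intro n hn
    obtain ⟨d, rfl⟩ := Nat.exists_eq_add_of_le hn
    rw [add_comm, iterate_add_apply, hM, iterate_fixed hfix]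
  have hevacuated : {u : V | ∃ m : ℕ, u ∉ ((estep α t)^[m] (univ, init)).1} = ↑Sᶜ := by
    ext u
    simp only [Set.mem_ofPred_eq, coe_compl, Set.mem_compl_iff, mem_coe]
    refine ⟨fun ⟨m, hm⟩ hu => hm ?_, fun hu => ⟨M, by rwa [hM]⟩⟩
    refine antitone_fst_iterate_estep _ (le_max_left m M) ?_
    simpa only [hstable _ (le_max_right m M)]
  rw [evacCount, hevacuated, Set.ncard_coe_finset]

end Evacuation

namespace DiffusionCounterexample

inductive Node (k : ℕ) : Type
  | a | x₁ | x₂ | c | b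
  | leaf (i : Fin k)
  deriving DecidableEq, Fintype

variable {k : ℕ}

namespace Node

def equivSum : Node k ≃ Fin 5 ⊕ Fin k where
  toFun
    | a => .inl 0 | x₁ => .inl 1 | x₂ => .inl 2 | c => .inl 3 | b => .inl 4
    | leaf i => .inr i
  invFun
    | .inl 0 => a | .inl 1 => x₁ | .inl 2 => x₂ | .inl 3 => c | .inl 4 => b
    | .inr i => leaf i
  left_inv u := by cases u <;> rfl
  right_inv u := by rcases u with i | i <;> [fin_cases i; skip] <;> rfl

theorem card_eq : Fintype.card (Node k) = k + 5 := by
  rw [Fintype.card_congr equivSum, Fintype.card_sum, Fintype.card_fin, Fintype.card_fin,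
    add_comm]

end Node

open Node

noncomputable def trust : Node k → Node k → ℝ≥0
  | a, x₁ | x₁, a | x₁, x₂ | x₂, x₁ | x₂, c | c, x₂ => 1
  | c, b | b, c => 1 / 10
  | c, leaf _ | leaf _, c => 1
  | _, _ => 0

noncomputable def threshold : Node k → ℝ≥0
  | c => 1 / 10
  | _ => 1 / 2

theorem trust_le_one (u v : Node k) : trust u v ≤ 1 := by
  cases u <;> cases v <;> simp [trust]

theorem estep_seed_ab_0 :
    estep trust threshold (univ, fun u : Node k => if u = a ∨ u = b then 1 else 0) =
      ({a, b}ᶜ, fun u =>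
        if u ∈ ({a, x₁, b} : Finset _) then 1 else if u = c then 1 / 10 else 0) := by
  refine estep_eq_of_believers (B := {a, b}) (fun u => ?_) (fun u => ?_) (fun u => ?_) <;>
    cases u <;> simp [trust, threshold]

theorem estep_seed_ab_1 :
    estep trust threshold
      ({a, b}ᶜ, fun u : Node k =>
        if u ∈ ({a, x₁, b} : Finset _) then 1 else if u = c then 1 / 10 else 0) =
      ({a, x₁, c, b}ᶜ, fun u => if u ∈ ({a, x₁, x₂, b} : Finset _) then 1 else 1 / 10) := by
  refine estep_eq_of_believers (B := {x₁, c}) (fun u => ?_) (fun u => ?_) (fun u => ?_) <;>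
    cases u <;> simp [trust, threshold]

theorem estep_seed_ab_2 :
    estep trust threshold
      ({a, x₁, c, b}ᶜ, fun u : Node k => if u ∈ ({a, x₁, x₂, b} : Finset _) then 1 else 1 / 10) =
      ({a, x₁, x₂, c, b}ᶜ, fun u => if u ∈ ({a, x₁, x₂, c, b} : Finset _) then 1 else 1 / 10) := by
  refine estep_eq_of_believers (B := {x₂}) (fun u => ?_) (fun u => ?_) (fun u => ?_) <;>
    cases u <;> simp [trust, threshold] <;> norm_num

theorem estep_seed_ab_3 :
    estep trust threshold
      ({a, x₁, x₂, c, b}ᶜ, fun u : Node k =>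
        if u ∈ ({a, x₁, x₂, c, b} : Finset _) then 1 else 1 / 10) =
      ({a, x₁, x₂, c, b}ᶜ, fun u => if u ∈ ({a, x₁, x₂, c, b} : Finset _) then 1 else 1 / 10) :=
  estep_eq_self_of_forall_lt fun u => by cases u <;> simp [threshold]; norm_num

theorem estep_seed_a_0 :
    estep trust threshold (univ, fun u : Node k => if u = a then 1 else 0) =
      ({a}ᶜ, fun u => if u ∈ ({a, x₁} : Finset _) then 1 else 0) := by
  refine estep_eq_of_believers (B := {a}) (fun u => ?_) (fun u => ?_) (fun u => ?_) <;>
    cases u <;> simp [trust, threshold]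

theorem estep_seed_a_1 :
    estep trust threshold ({a}ᶜ, fun u : Node k => if u ∈ ({a, x₁} : Finset _) then 1 else 0) =
      ({a, x₁}ᶜ, fun u => if u ∈ ({a, x₁, x₂} : Finset _) then 1 else 0) := by
  refine estep_eq_of_believers (B := {x₁}) (fun u => ?_) (fun u => ?_) (fun u => ?_) <;>
    cases u <;> simp [trust, threshold]

theorem estep_seed_a_2 :
    estep trust threshold
      ({a, x₁}ᶜ, fun u : Node k => if u ∈ ({a, x₁, x₂} : Finset _) then 1 else 0) =
      ({a, x₁, x₂}ᶜ, fun u => if u ∈ ({a, x₁, x₂, c} : Finset _) then 1 else 0) := by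
  refine estep_eq_of_believers (B := {x₂}) (fun u => ?_) (fun u => ?_) (fun u => ?_) <;>
    cases u <;> simp [trust, threshold]

theorem estep_seed_a_3 :
    estep trust threshold
      ({a, x₁, x₂}ᶜ, fun u : Node k => if u ∈ ({a, x₁, x₂, c} : Finset _) then 1 else 0) =
      ({a, x₁, x₂, c}ᶜ, fun u => if u = b then 1 / 10 else 1) := by
  refine estep_eq_of_believers (B := {c}) (fun u => ?_) (fun u => ?_) (fun u => ?_) <;>
    cases u <;> simp [trust, threshold]

theorem estep_seed_a_4 :
    estep trust threshold ({a, x₁, x₂, c}ᶜ, fun u : Node k => if u = b then 1 / 10 else 1) =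
      ({b}, fun u => if u = b then 1 / 10 else 1) := by
  refine estep_eq_of_believers (B := univ.image leaf) (fun u => ?_) (fun u => ?_) (fun u => ?_) <;>
    cases u <;> simp [trust, threshold] <;> norm_num

theorem estep_seed_a_5 :
    estep trust threshold ({b}, fun u : Node k => if u = b then 1 / 10 else 1) =
      ({b}, fun u => if u = b then 1 / 10 else 1) :=
  estep_eq_self_of_forall_lt fun u => by cases u <;> simp [threshold]; norm_num

theorem evacCount_seed_ab :
    evacCount inferInstance trust threshold
      (fun u : Node k => if u = a ∨ u = b then 1 else 0) = 5 := by
  rw [evacCount_eq_card_compl (M := 3) ?_ estep_seed_ab_3]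
  · simp
  · rw [iterate_succ_apply', iterate_succ_apply', iterate_one, estep_seed_ab_0, estep_seed_ab_1,
      estep_seed_ab_2]

theorem evacCount_seed_a :
    evacCount inferInstance trust threshold (fun u : Node k => if u = a then 1 else 0) = k + 4 := by
  rw [evacCount_eq_card_compl (M := 5) ?_ estep_seed_a_5, card_compl, card_eq, card_singleton]
  · rfl
  · rw [iterate_succ_apply', iterate_succ_apply', iterate_succ_apply', iterate_succ_apply',
      iterate_one, estep_seed_a_0, estep_seed_a_1, estep_seed_a_2, estep_seed_a_3, estep_seed_a_4]

end DiffusionCounterexample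

open DiffusionCounterexample Node in
/-- The coverage function of the general diffusion model is not monotone: for every
`k ≥ 2` there is a network (with trust values, thresholds, evacuation time `τ = 1` and a
single fully-trusted source of value `1`) and nodes `a ≠ b` such that seeding
`ψ' = {a,b}` evacuates exactly `5` nodes while seeding `ψ = {a}` evacuates `k + 4` nodes,
so the larger seed set yields strictly fewer evacuated nodes. -/
theorem general_model_not_monotone :
    ∀ k : ℕ, 2 ≤ k →
      ∃ (V : Type) (iV : Fintype V) (α : V → V → ℝ≥0) (t : V → ℝ≥0) (a b : V),
        a ≠ b ∧ (∀ u v, α u v ≤ 1) ∧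
        evacCount iV α t (fun u => if u = a ∨ u = b then 1 else 0) = 5 ∧
        evacCount iV α t (fun u => if u = a then 1 else 0) = k + 4 ∧
        evacCount iV α t (fun u => if u = a ∨ u = b then 1 else 0) <
          evacCount iV α t (fun u => if u = a then 1 else 0) := by
  intro k hk
  refine ⟨Node k, inferInstance, trust, threshold, a, b, nofun, trust_le_one, ?_, ?_, ?_⟩
  -- the statement decides `u = a` classically; `convert` matches it with the derived instance
  · convert evacCount_seed_ab using 4
  · convert evacCount_seed_a using 4
  · convert (show 5 < k + 4 by omega) using 2
    · convert evacCount_seed_ab using 4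
    · convert evacCount_seed_a using 4
end

section
/- In the max-max diffusion model with no evacuation and no querying, the final information value at node u from source k when seeding node x equals α(k,x) · I_k · max over all paths P from x to u of the product of edge trusts along P, provided at every intermediate node w on the maximizing path the accumulated value reaches t(w); in particular, if all thresholds are 0, the final value at u from singleton seed (x,k) is α(k,x) · I_k · max_P ∏_{(v,w) ∈ P} α(v,w). -/
/-!
With all thresholds `0` every node propagates at every step, so the value of source `k` evolves
on its own: after `m` steps it is the seed value times the best trust product of a walk from `x`
to `u` with at most `m` edges. The propagated values and the seeded walk products therefore
dominate each other termwise, so their suprema in `ℝ≥0` agree, also when both families are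
unbounded and both suprema take the junk value `0`.
-/

open scoped NNReal

/-- The product of the edge trusts along the walk starting at `v` and visiting the
vertices of `l` in order. -/
noncomputable def walkProd {V : Type*} (α : V → V → ℝ≥0) : V → List V → ℝ≥0
  | _, [] => 1
  | v, w :: l => α v w * walkProd α w l

theorem ciSup_eq_ciSup_of_forall_exists_le {α ι κ : Type*} [ConditionallyCompleteLinearOrder α]
    {f : ι → α} {g : κ → α} (hf : ∀ i, ∃ j, f i ≤ g j) (hg : ∀ j, ∃ i, g j ≤ f i) :
    ⨆ i, f i = ⨆ j, g j :=
  csSup_eq_csSup_of_forall_exists_le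
    (Set.forall_mem_range.2 fun i => let ⟨j, h⟩ := hf i; ⟨g j, ⟨j, rfl⟩, h⟩)
    (Set.forall_mem_range.2 fun j => let ⟨i, h⟩ := hg j; ⟨f i, ⟨i, rfl⟩, h⟩)

section WalkProd

variable {V : Type*} (α : V → V → ℝ≥0)

theorem walkProd_append_singleton (v w : V) (l : List V) :
    walkProd α v (l ++ [w]) = walkProd α v l * α (l.getLastD v) w := by
  induction l generalizing v with
  | nil => simp [walkProd]
  | cons a l ih => simp only [List.cons_append, walkProd, ih, List.getLastD_cons, mul_assoc]

variable [DecidableEq V]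

noncomputable def walkProdTo (x u : V) (l : List V) : ℝ≥0 :=
  if l.getLastD x = u then walkProd α x l else 0

variable {α} in
theorem walkProdTo_of_getLastD_eq {x u : V} {l : List V} (h : l.getLastD x = u) :
    walkProdTo α x u l = walkProd α x l :=
  if_pos h

variable {α} in
theorem walkProdTo_of_getLastD_ne {x u : V} {l : List V} (h : l.getLastD x ≠ u) :
    walkProdTo α x u l = 0 :=
  if_neg h

theorem walkProdTo_nil_self (x : V) : walkProdTo α x x [] = 1 :=
  walkProdTo_of_getLastD_eq rfl

theorem mul_walkProdTo_le_append_singleton (x v w : V) (l : List V) :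
    α v w * walkProdTo α x v l ≤ walkProdTo α x w (l ++ [w]) := by
  by_cases h : l.getLastD x = v
  · rw [walkProdTo_of_getLastD_eq h, walkProdTo_of_getLastD_eq (List.getLastD_concat ..),
      walkProd_append_singleton, h, mul_comm]
  · rw [walkProdTo_of_getLastD_ne h, mul_zero]
    exact zero_le

end WalkProd

section ZeroThreshold

variable {V : Type*} [Fintype V] {K : ℕ} (α : V → V → ℝ≥0) {t : V → ℝ≥0}
  {init : V → Fin K → ℝ≥0}

@[simp]
theorem mval_zero : mval α t init 0 = init :=
  rfl

theorem mval_succ_of_threshold_eq_zero (ht : ∀ v, t v = 0) (m : ℕ) (u : V) (j : Fin K) :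
    mval α t init (m + 1) u j =
      mval α t init m u j ⊔ Finset.univ.sup fun v => α v u * mval α t init m v j := by
  simp [mval, ht]

theorem mul_mval_le_mval_succ_of_threshold_eq_zero (ht : ∀ v, t v = 0) (m : ℕ) (v u : V)
    (j : Fin K) : α v u * mval α t init m v j ≤ mval α t init (m + 1) u j := by
  rw [mval_succ_of_threshold_eq_zero α ht]
  exact le_sup_of_le_right
    (Finset.le_sup (f := fun v => α v u * mval α t init m v j) (Finset.mem_univ v))

theorem mul_walkProd_le_mval (ht : ∀ v, t v = 0) {x : V} {k : Fin K} {c : ℝ≥0}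
    (hx : c ≤ init x k) (l : List V) :
    c * walkProd α x l ≤ mval α t init l.length (l.getLastD x) k := by
  induction l using List.reverseRecOn with
  | nil => simpa [walkProd] using hx
  | append_singleton l w ih =>
    calc c * walkProd α x (l ++ [w])
        = α (l.getLastD x) w * (c * walkProd α x l) := by
          rw [walkProd_append_singleton]; ring
      _ ≤ α (l.getLastD x) w * mval α t init l.length (l.getLastD x) k := by gcongr
      _ ≤ mval α t init (l ++ [w]).length ((l ++ [w]).getLastD x) k := by
          rw [List.length_append, List.length_singleton, List.getLastD_concat]
          exact mul_mval_le_mval_succ_of_threshold_eq_zero α ht _ _ _ _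

variable [DecidableEq V]

theorem mul_walkProdTo_le_mval (ht : ∀ v, t v = 0) {x : V} {k : Fin K} {c : ℝ≥0}
    (hx : c ≤ init x k) (u : V) (l : List V) :
    c * walkProdTo α x u l ≤ mval α t init l.length u k := by
  by_cases h : l.getLastD x = u
  · rw [walkProdTo_of_getLastD_eq h, ← h]
    exact mul_walkProd_le_mval α ht hx l
  · rw [walkProdTo_of_getLastD_ne h, mul_zero]
    exact zero_le

theorem exists_mval_le_mul_walkProdTo (ht : ∀ v, t v = 0) {x : V} {k : Fin K} {c : ℝ≥0}
    (hinit : ∀ v, init v k ≤ if v = x then c else 0) (m : ℕ) (u : V) :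
    ∃ l, mval α t init m u k ≤ c * walkProdTo α x u l := by
  induction m generalizing u with
  | zero =>
    refine ⟨[], ?_⟩
    by_cases hu : u = x
    · subst hu
      simpa [walkProdTo_nil_self] using hinit u
    · have h0 : init u k = 0 := by simpa [hu] using hinit u
      simp [h0]
  | succ m ih =>
    rw [mval_succ_of_threshold_eq_zero α ht]
    obtain ⟨v, -, hv⟩ := Finset.exists_mem_eq_sup Finset.univ ⟨u, Finset.mem_univ u⟩
      fun v => α v u * mval α t init m v k
    rcases le_total (mval α t init m u k) (α v u * mval α t init m v k) with hle | hle
    · obtain ⟨l, hl⟩ := ih v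
      refine ⟨l ++ [u], ?_⟩
      calc mval α t init m u k ⊔ _ = α v u * mval α t init m v k := by
            rw [hv, sup_eq_right.2 hle]
        _ ≤ α v u * (c * walkProdTo α x v l) := by gcongr
        _ = c * (α v u * walkProdTo α x v l) := mul_left_comm ..
        _ ≤ c * walkProdTo α x u (l ++ [u]) := by
          gcongr
          exact mul_walkProdTo_le_append_singleton α x v u l
    · rw [hv, sup_eq_left.2 hle]
      exact ih u

end ZeroThreshold

theorem maxmax_final_value_eq_max_path_product_general {V : Type*} [Fintype V] [DecidableEq V]
    {K : ℕ} (α : V → V → ℝ≥0) (t : V → ℝ≥0) (I : Fin K → ℝ≥0) (β : Fin K → V → ℝ≥0)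
    (ht : ∀ u, t u = 0) (x : V) (k : Fin K) (u : V) :
    (⨆ m : ℕ, mval α t (fun u j => if u = x ∧ j = k then β k x * I k else 0) m u k) =
      β k x * I k * ⨆ l : List V, if l.getLastD x = u then walkProd α x l else 0 := by
  change _ = β k x * I k * ⨆ l, walkProdTo α x u l
  rw [NNReal.mul_iSup]
  exact ciSup_eq_ciSup_of_forall_exists_le
    (exists_mval_le_mul_walkProdTo α ht (fun v => by by_cases hv : v = x <;> simp [hv]) · u)
    (fun l => ⟨l.length, mul_walkProdTo_le_mval α ht (by simp) u l⟩)

/-- In the max-max model with no evacuation and no querying, when all thresholds are `0`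
(so every node always propagates), the final information value at node `u` from source `k`
when seeding only node `x` equals `α(k,x) · I_k` times the maximum, over all walks from
`x` to `u`, of the product of the edge trusts along the walk. -/
theorem maxmax_final_value_eq_max_path_product {V : Type*} [Fintype V] [DecidableEq V]
    {K : ℕ} (α : V → V → ℝ≥0) (t : V → ℝ≥0) (I : Fin K → ℝ≥0) (β : Fin K → V → ℝ≥0)
    (hα : ∀ u v, α u v ≤ 1) (hβ : ∀ k u, β k u ≤ 1)
    (ht : ∀ u, t u = 0) (x : V) (k : Fin K) (u : V) :
    (⨆ m : ℕ, mval α t (fun u j => if u = x ∧ j = k then β k x * I k else 0) m u k) =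
      β k x * I k * ⨆ l : List V, if l.getLastD x = u then walkProd α x l else 0 :=
  maxmax_final_value_eq_max_path_product_general α t I β ht x k u
end
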